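/- Let k be a commutative ring, G a finite group, and N ◁ G a normal subgroup with [G:N] a unit of k. Then for every ℕ-graded commutative k-algebra A with an action of G by degree-preserving k-algebra automorphisms one has β(A^G) ≤ β_k(G/N)·β(A^N). In particular, if moreover |G| is a unit of k, then β_k(G) ≤ β_k(G/N)·β_k(N). -/

import Mathlib

/-- `beta`: see above. -/
noncomputable def beta {A : Type*} [CommRing A] (𝒜 : ℕ → Set A) (B : Subring A) : ℕ∞ :=
  sInf ((↑) '' {n : ℕ | B ≤ Subring.closure {a : A | a ∈ B ∧ ∃ d ≤ n, a ∈ 𝒜 d}})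

/-- An `ℕ`-graded commutative `k`-algebra equipped with an action of `G` by
degree-preserving `k`-algebra automorphisms. -/
structure GradedAlgebraWithAction (k : Type) [CommRing k] (G : Type) [Group G] :
    Type 1 where
  carrier : Type
  [commRing : CommRing carrier]
  [algebra : Algebra k carrier]
  grading : ℕ → Submodule k carrier
  graded : GradedAlgebra grading
  action : G →* (carrier ≃ₐ[k] carrier)
  degPres : ∀ (g : G) (d : ℕ), ∀ a ∈ grading d, action g a ∈ grading d

attribute [instance] GradedAlgebraWithAction.commRing GradedAlgebraWithAction.algebra

namespace GradedAlgebraWithAction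

variable {k G : Type} [CommRing k] [Group G] (X : GradedAlgebraWithAction k G)

/-- The invariant subring `A^G`. -/
def inv : Subring X.carrier where
  carrier := {a : X.carrier | ∀ g : G, X.action g a = a}
  mul_mem' := by intro a b ha hb g; rw [map_mul, ha g, hb g]
  one_mem' := fun g => map_one (X.action g)
  add_mem' := by intro a b ha hb g; rw [map_add, ha g, hb g]
  zero_mem' := fun g => map_zero (X.action g)
  neg_mem' := by intro a ha g; rw [map_neg, ha g]

/-- The invariant subring fixed by a subgroup `H ≤ G`. -/
def invSub (H : Subgroup G) : Subring X.carrier where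
  carrier := {a : X.carrier | ∀ g ∈ H, X.action g a = a}
  mul_mem' := by intro a b ha hb g hg; rw [map_mul, ha g hg, hb g hg]
  one_mem' := fun g _ => map_one (X.action g)
  add_mem' := by intro a b ha hb g hg; rw [map_add, ha g hg, hb g hg]
  zero_mem' := fun g _ => map_zero (X.action g)
  neg_mem' := by intro a ha g hg; rw [map_neg, ha g hg]

/-- `β(A)` of the underlying graded algebra. -/
noncomputable def betaTop : ℕ∞ := beta (fun d => (X.grading d : Set X.carrier)) ⊤

/-- `β(A^G)` for the induced grading on the invariant ring. -/
noncomputable def betaInv : ℕ∞ := beta (fun d => (X.grading d : Set X.carrier)) X.inv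

end GradedAlgebraWithAction

/-- `β_k(G)`: the supremum of `β(A^G)` over all `ℕ`-graded commutative `k`-algebras `A`
with an action of `G` by degree-preserving `k`-algebra automorphisms and `β(A) ≤ 1`. -/
noncomputable def betaRing (k : Type) [CommRing k] (G : Type) [Group G] : ℕ∞ :=
  ⨆ (X : GradedAlgebraWithAction k G) (_ : X.betaTop ≤ 1), X.betaInv

/-!
Let `m = β(A^N)` and let `S` be the set of homogeneous elements of `A^N` of degree `≤ m`. As `N`
is normal, `G` permutes `S` through `G/N`, so `G/N` acts on the polynomial ring `k[S]`, which is
generated in degree `1`, and evaluation `k[S] → A` is equivariant with image containing `A^N`.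
Since `[G:N]` is invertible, averaging over `G/N` lifts every `a ∈ A^G` to an invariant of `k[S]`,
which is a polynomial in invariants of degree `≤ β_k(G/N)`; in `A` these become invariants whose
homogeneous components, again invariant, have degree `≤ β_k(G/N) · m`. In `ℕ∞` one has
`0 · ⊤ = 0`, so the cases `m = 0` and `β_k(G/N) = 0` (which happens only over the zero ring) are
treated directly. The second statement follows from the first because `A^N` is the invariant ring
of the restricted action of `N`.
-/

attribute [instance] GradedAlgebraWithAction.graded

open MvPolynomial

section Beta

variable {A : Type*} [CommRing A]

def homogeneousLE (𝒜 : ℕ → Set A) (B : Subring A) (n : ℕ) : Set A :=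
  {a | a ∈ B ∧ ∃ d ≤ n, a ∈ 𝒜 d}

lemma homogeneousLE_mono (𝒜 : ℕ → Set A) (B : Subring A) {m n : ℕ} (h : m ≤ n) :
    homogeneousLE 𝒜 B m ⊆ homogeneousLE 𝒜 B n :=
  fun _ ⟨ha, d, hd, had⟩ => ⟨ha, d, hd.trans h, had⟩

lemma beta_le_coe_iff (𝒜 : ℕ → Set A) (B : Subring A) {n : ℕ} :
    beta 𝒜 B ≤ n ↔ B ≤ Subring.closure (homogeneousLE 𝒜 B n) := by
  refine ⟨fun h => ?_, fun h => sInf_le ⟨n, h, rfl⟩⟩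
  set S : Set ℕ := {n | B ≤ Subring.closure (homogeneousLE 𝒜 B n)}
  replace h : sInf ((↑) '' S : Set ℕ∞) ≤ n := h
  have hne : ((↑) '' S : Set ℕ∞).Nonempty := by
    by_contra hemp
    simp [Set.not_nonempty_iff_eq_empty.1 hemp] at h
  obtain ⟨m, hm, hmeq⟩ := csInf_mem hne
  have hmn : m ≤ n := by rwa [← Nat.cast_le (α := ℕ∞), hmeq]
  exact hm.trans (Subring.closure_mono (homogeneousLE_mono 𝒜 B hmn))

lemma beta_eq_zero_of_subsingleton [Subsingleton A] (𝒜 : ℕ → Set A) (B : Subring A) :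
    beta 𝒜 B = 0 := by
  rw [← nonpos_iff_eq_zero, ← Nat.cast_zero, beta_le_coe_iff]
  intro a _
  rw [Subsingleton.elim a 0]
  exact zero_mem _

lemma beta_eq_zero_iff_subset_gradeZero {k : Type*} [CommRing k] [Algebra k A]
    (𝒜 : ℕ → Submodule k A) [GradedAlgebra 𝒜] (B : Subring A) :
    beta (fun d => (𝒜 d : Set A)) B = 0 ↔ (B : Set A) ⊆ 𝒜 0 := by
  rw [← nonpos_iff_eq_zero, ← Nat.cast_zero, beta_le_coe_iff]
  refine ⟨fun h a ha => ?_, fun h a ha => Subring.subset_closure ⟨ha, 0, le_rfl, h ha⟩⟩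
  refine (Subring.closure_le (t := SetLike.GradeZero.subring 𝒜)).2 ?_ (h ha)
  rintro b ⟨-, d, hd, hb⟩
  rwa [Nat.le_zero.1 hd] at hb

end Beta

lemma ENat.le_mul_of_forall_coe_le {a b c : ℕ∞} (ha : a = 0 → c = 0) (hb : b = 0 → c = 0)
    (h : ∀ m n : ℕ, a ≤ m → b ≤ n → c ≤ m * n) : c ≤ a * b := by
  induction a using ENat.recTopCoe with
  | top =>
    obtain rfl | hb0 := eq_or_ne b 0
    · simp [hb rfl]
    · simp [hb0]
  | coe m =>
  induction b using ENat.recTopCoe with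
  | top =>
    obtain rfl | hm0 := eq_or_ne m 0
    · simp [ha rfl]
    · simp [hm0]
  | coe n => exact h m n le_rfl le_rfl

namespace GradedAlgebraWithAction

variable (k : Type) [CommRing k]

noncomputable def renameHom (S : Type) :
    Equiv.Perm S →* (MvPolynomial S k ≃ₐ[k] MvPolynomial S k) where
  toFun e := renameEquiv k e
  map_one' := AlgEquiv.ext rename_id_apply
  map_mul' e f := AlgEquiv.ext fun p => (rename_rename f e p).symm

noncomputable def mvPolynomial {H S : Type} [Group H] (ρ : H →* Equiv.Perm S) :
    GradedAlgebraWithAction k H where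
  carrier := MvPolynomial S k
  grading := homogeneousSubmodule S k
  graded := MvPolynomial.gradedAlgebra
  action := (renameHom k S).comp ρ
  degPres _ _ _ ha := ha.rename_isHomogeneous

variable {k}

lemma mvPolynomial_action_apply {H S : Type} [Group H] (ρ : H →* Equiv.Perm S) (h : H)
    (p : MvPolynomial S k) : (mvPolynomial k ρ).action h p = rename (ρ h) p :=
  rfl

lemma betaTop_mvPolynomial_le_one {H S : Type} [Group H] (ρ : H →* Equiv.Perm S) :
    (mvPolynomial k ρ).betaTop ≤ 1 := by
  rw [betaTop, ← Nat.cast_one, beta_le_coe_iff]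
  intro p _
  induction p using MvPolynomial.induction_on with
  | C a => exact Subring.subset_closure ⟨trivial, 0, zero_le_one, isHomogeneous_C _ _⟩
  | add p q hp hq => exact add_mem (hp trivial) (hq trivial)
  | mul_X p v hp =>
    exact mul_mem (hp trivial)
      (Subring.subset_closure ⟨trivial, 1, le_rfl, isHomogeneous_X _ _⟩)

end GradedAlgebraWithAction

open GradedAlgebraWithAction in
lemma one_le_betaRing (k : Type) [CommRing k] [Nontrivial k] (H : Type) [Group H] :
    1 ≤ betaRing k H := by
  let P := mvPolynomial k (1 : H →* Equiv.Perm Unit)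
  refine le_trans ?_ (le_iSup₂_of_le P (betaTop_mvPolynomial_le_one _) le_rfl)
  rw [Order.one_le_iff_ne_zero, betaInv, Ne, beta_eq_zero_iff_subset_gradeZero]
  intro hzero
  have hX : (X () : MvPolynomial Unit k) ∈ P.inv := fun h => by
    rw [mvPolynomial_action_apply, MonoidHom.one_apply, Equiv.Perm.coe_one, rename_id_apply]
  exact zero_ne_one ((hzero hX : IsHomogeneous _ 0).inj_right (isHomogeneous_X k ()) (X_ne_zero ()))

namespace GradedAlgebraWithAction

variable {k G : Type} [CommRing k] [Group G] (X : GradedAlgebraWithAction k G)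

lemma action_mul_apply (g h : G) (a : X.carrier) :
    X.action (g * h) a = X.action g (X.action h a) := by
  rw [map_mul, AlgEquiv.mul_apply]

lemma inv_le_invSub (H : Subgroup G) : X.inv ≤ X.invSub H :=
  fun _ ha g _ => ha g

lemma proj_action (d : ℕ) (g : G) (a : X.carrier) :
    GradedAlgebra.proj X.grading d (X.action g a) =
      X.action g (GradedAlgebra.proj X.grading d a) := by
  induction a using DirectSum.Decomposition.inductionOn X.grading with
  | zero => simp
  | add b c hb hc => simp only [map_add, hb, hc]
  | @homogeneous i x =>
    obtain ⟨x, hx⟩ := x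
    have hgx := X.degPres g i x hx
    simp only [GradedAlgebra.proj_apply]
    obtain rfl | hid := eq_or_ne i d
    · rw [DirectSum.decompose_of_mem_same _ hx, DirectSum.decompose_of_mem_same _ hgx]
    · rw [DirectSum.decompose_of_mem_ne _ hx hid, DirectSum.decompose_of_mem_ne _ hgx hid,
        map_zero]

lemma proj_mem_inv {a : X.carrier} (ha : a ∈ X.inv) (d : ℕ) :
    GradedAlgebra.proj X.grading d a ∈ X.inv := fun g => by
  rw [← proj_action, ha g]

lemma mem_closure_homogeneousLE_of_proj_eq_zero {a : X.carrier} (ha : a ∈ X.inv) {D : ℕ}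
    (hD : ∀ d, D < d → GradedAlgebra.proj X.grading d a = 0) :
    a ∈ Subring.closure (homogeneousLE (fun d => (X.grading d : Set X.carrier)) X.inv D) := by
  classical
  rw [← DirectSum.sum_support_decompose X.grading a]
  refine Subring.sum_mem _ fun d _ => ?_
  obtain hdD | hDd := le_or_gt d D
  · exact Subring.subset_closure ⟨X.proj_mem_inv ha d, d, hdD, SetLike.coe_mem _⟩
  · rw [← GradedAlgebra.proj_apply, hD d hDd]
    exact zero_mem _

lemma sum_action_mem_inv [Fintype G] (a : X.carrier) : ∑ g, X.action g a ∈ X.inv := by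
  intro h
  simp only [map_sum, ← action_mul_apply]
  exact Fintype.sum_equiv (Equiv.mulLeft h) _ _ fun _ => rfl

def res (H : Subgroup G) : GradedAlgebraWithAction k H where
  carrier := X.carrier
  grading := X.grading
  graded := X.graded
  action := X.action.comp H.subtype
  degPres g := X.degPres g

lemma res_inv (H : Subgroup G) : (X.res H).inv = X.invSub H :=
  Subring.ext fun _ => ⟨fun h g hg => h ⟨g, hg⟩, fun h g => h g g.2⟩

variable (N : Subgroup G) (m : ℕ)

def invGens : Set X.carrier :=
  homogeneousLE (fun d => (X.grading d : Set X.carrier)) (X.invSub N) m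

noncomputable def evalGens : MvPolynomial (X.invGens N m) k →ₐ[k] X.carrier :=
  aeval Subtype.val

variable {X N m}

lemma exists_evalGens_eq (hm : X.invSub N ≤ Subring.closure (X.invGens N m)) {a : X.carrier}
    (ha : a ∈ X.invSub N) : ∃ p, X.evalGens N m p = a := by
  have hrange : Subring.closure (X.invGens N m) ≤ (X.evalGens N m).range.toSubring :=
    Subring.closure_le.2 fun s hs => ⟨MvPolynomial.X ⟨s, hs⟩, aeval_X _ _⟩
  exact hrange (hm ha)

lemma proj_evalGens_eq_zero {p : MvPolynomial (X.invGens N m) k} {e : ℕ} (hp : p.IsHomogeneous e)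
    {d : ℕ} (hd : e * m < d) : GradedAlgebra.proj X.grading d (X.evalGens N m p) = 0 := by
  choose deg hdeg hmem using fun v : X.invGens N m => v.2.2
  rw [p.as_sum, map_sum, map_sum]
  refine Finset.sum_eq_zero fun s hs => ?_
  have hprod :
      (s.prod fun v n => (v : X.carrier) ^ n) ∈ X.grading (∑ v ∈ s.support, s v • deg v) :=
    SetLike.prod_pow_mem_graded X.grading deg _ _ fun v _ => hmem v
  have hle : ∑ v ∈ s.support, s v • deg v ≤ e * m := calc
    ∑ v ∈ s.support, s v • deg v ≤ ∑ v ∈ s.support, s v * m :=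
      Finset.sum_le_sum fun v _ => Nat.mul_le_mul_left _ (hdeg v)
    _ = e * m := by rw [← Finset.sum_mul, ← hp.degree_eq_sum_deg_support hs]
  rw [evalGens, aeval_monomial, ← Algebra.smul_def, map_smul, GradedAlgebra.proj_apply,
    DirectSum.decompose_of_mem_ne _ hprod (by omega), smul_zero]

variable (X) [N.Normal]

lemma action_mem_invGens (g : G) {a : X.carrier} (ha : a ∈ X.invGens N m) :
    X.action g a ∈ X.invGens N m := by
  obtain ⟨haN, d, hd, had⟩ := ha
  refine ⟨fun n hn => ?_, d, hd, X.degPres g d a had⟩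
  have hconj : g⁻¹ * n * g ∈ N := by simpa using Subgroup.Normal.conj_mem' ‹_› n hn g
  rw [← action_mul_apply, show n * g = g * (g⁻¹ * n * g) by group, action_mul_apply,
    haN _ hconj]

variable (N m)

def gensPermOfGroup : G →* Equiv.Perm (X.invGens N m) where
  toFun g := (X.action g).toEquiv.subtypeEquiv fun a =>
    ⟨X.action_mem_invGens g, fun h => by
      simpa [← action_mul_apply] using X.action_mem_invGens g⁻¹ h⟩
  map_one' := Equiv.ext fun a => Subtype.ext (by simp)
  map_mul' g h := Equiv.ext fun a => Subtype.ext (X.action_mul_apply g h a)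

noncomputable def gensPerm : G ⧸ N →* Equiv.Perm (X.invGens N m) :=
  QuotientGroup.lift N (X.gensPermOfGroup N m) fun n hn =>
    Equiv.ext fun a => Subtype.ext (a.2.1 n hn)

noncomputable def polyOnGens : GradedAlgebraWithAction k (G ⧸ N) :=
  mvPolynomial k (X.gensPerm N m)

lemma evalGens_action (g : G) (p : MvPolynomial (X.invGens N m) k) :
    X.evalGens N m ((X.polyOnGens N m).action g p) = X.action g (X.evalGens N m p) := by
  have hcomp : (X.evalGens N m).comp ((X.polyOnGens N m).action g).toAlgHom =
      (X.action g).toAlgHom.comp (X.evalGens N m) :=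
    MvPolynomial.algHom_ext fun s => by
      change X.evalGens N m (rename (X.gensPerm N m g) (MvPolynomial.X s)) = _
      rw [rename_X, AlgHom.comp_apply, evalGens, aeval_X, aeval_X]
      rfl
  exact DFunLike.congr_fun hcomp p

variable {X N m}

lemma exists_mem_inv_evalGens_eq [Finite G] (hunit : IsUnit (N.index : k))
    (hm : X.invSub N ≤ Subring.closure (X.invGens N m)) {a : X.carrier} (ha : a ∈ X.inv) :
    ∃ p ∈ (X.polyOnGens N m).inv, X.evalGens N m p = a := by
  have := Fintype.ofFinite (G ⧸ N)
  obtain ⟨p, rfl⟩ := exists_evalGens_eq hm (X.inv_le_invSub N ha)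
  obtain ⟨u, hu⟩ := isUnit_iff_exists_inv.1 hunit
  let avg : (X.polyOnGens N m).carrier := ∑ q, (X.polyOnGens N m).action q p
  have havg : avg ∈ (X.polyOnGens N m).inv := sum_action_mem_inv (X.polyOnGens N m) p
  refine ⟨u • avg, fun q => by rw [map_smul, havg q], ?_⟩
  have hterm (q : G ⧸ N) : X.evalGens N m ((X.polyOnGens N m).action q p) = X.evalGens N m p := by
    obtain ⟨g, rfl⟩ := QuotientGroup.mk_surjective q
    rw [evalGens_action, ha g]
  have hsum : X.evalGens N m (u • avg) =
      u • ∑ q, X.evalGens N m ((X.polyOnGens N m).action q p) :=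
    (map_smul _ _ _).trans (congrArg _ (map_sum _ _ _))
  rw [hsum, Finset.sum_congr rfl fun q _ => hterm q, Finset.sum_const, Finset.card_univ,
    ← Nat.card_eq_fintype_card, ← Subgroup.index, ← Nat.cast_smul_eq_nsmul k, smul_smul,
    mul_comm, hu, one_smul]

lemma inv_le_closure_homogeneousLE_mul [Finite G] (hunit : IsUnit (N.index : k))
    (hm : X.invSub N ≤ Subring.closure (X.invGens N m)) {n : ℕ}
    (hn : (X.polyOnGens N m).inv ≤ Subring.closure (homogeneousLE
      (fun d => ((X.polyOnGens N m).grading d : Set (X.polyOnGens N m).carrier))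
      (X.polyOnGens N m).inv n)) :
    X.inv ≤
      Subring.closure (homogeneousLE (fun d => (X.grading d : Set X.carrier)) X.inv (n * m)) := by
  intro a ha
  obtain ⟨p, hp, rfl⟩ := exists_mem_inv_evalGens_eq hunit hm ha
  have hmap : X.evalGens N m p ∈ (Subring.closure (homogeneousLE _ _ n)).map
      (X.evalGens N m : MvPolynomial (X.invGens N m) k →+* X.carrier) := ⟨p, hn hp, rfl⟩
  rw [RingHom.map_closure] at hmap
  refine Subring.closure_le.2 ?_ hmap
  rintro _ ⟨q, ⟨hq, e, he, hqe⟩, rfl⟩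
  change X.evalGens N m q ∈ _
  refine X.mem_closure_homogeneousLE_of_proj_eq_zero (fun g => ?_) fun d hd =>
    proj_evalGens_eq_zero hqe ((Nat.mul_le_mul_right m he).trans_lt hd)
  rw [← evalGens_action, hq]

end GradedAlgebraWithAction

open GradedAlgebraWithAction in
/-- Let `k` be a commutative ring, `G` a finite group, and `N ◁ G`
a normal subgroup with `[G:N]` a unit of `k`.  Then for every `ℕ`-graded commutative
`k`-algebra `A` with an action of `G` by degree-preserving `k`-algebra automorphisms
one has `β(A^G) ≤ β_k(G/N) ⬝ β(A^N)` (where `A^N` carries the induced grading and the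
induced action of `G/N`).  In particular, if moreover `|G|` is a unit of `k`, then
`β_k(G) ≤ β_k(G/N) ⬝ β_k(N)`. -/
theorem betaInv_le_betaRing_quotient_mul (k G : Type) [CommRing k] [Group G] [Finite G]
    (N : Subgroup G) [N.Normal] (hunit : IsUnit ((N.index : k))) :
    (∀ X : GradedAlgebraWithAction k G,
        X.betaInv ≤ betaRing k (G ⧸ N) *
          beta (fun d => (X.grading d : Set X.carrier)) (X.invSub N)) ∧
      (IsUnit ((Nat.card G : k)) → betaRing k G ≤ betaRing k (G ⧸ N) * betaRing k N) := by
  have main (X : GradedAlgebraWithAction k G) : X.betaInv ≤ betaRing k (G ⧸ N) *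
      beta (fun d => (X.grading d : Set X.carrier)) (X.invSub N) := by
    refine ENat.le_mul_of_forall_coe_le (fun hr => ?_) (fun ht => ?_) fun n m hr ht => ?_
    · have : Subsingleton k := not_nontrivial_iff_subsingleton.1 fun _ => by
        simpa [hr] using one_le_betaRing k (G ⧸ N)
      have := Module.subsingleton k X.carrier
      exact beta_eq_zero_of_subsingleton _ _
    · rw [betaInv, beta_eq_zero_iff_subset_gradeZero]
      rw [beta_eq_zero_iff_subset_gradeZero] at ht
      exact (SetLike.coe_subset_coe.2 (X.inv_le_invSub N)).trans ht
    · have hpoly :=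
        (le_iSup₂_of_le (X.polyOnGens N m) (betaTop_mvPolynomial_le_one _) le_rfl).trans hr
      rw [← Nat.cast_mul, betaInv, beta_le_coe_iff]
      exact X.inv_le_closure_homogeneousLE_mul hunit ((beta_le_coe_iff _ _).1 ht)
        ((beta_le_coe_iff _ _).1 hpoly)
  refine ⟨main, fun _ => iSup₂_le fun X hX => (main X).trans (mul_le_mul_right ?_ _)⟩
  rw [← X.res_inv N]
  exact le_iSup₂_of_le (X.res N) hX le_rfl
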